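/- Let $\lambda : A \times A \to (M, *)$ be a hermitian form. Then the group $M^c_e$ is abelian, $(M^c_e, M, h^c, p^c)$ is a commutative quadratic group (where $h^c$ is the homomorphism induced on the quotient by $h_\lambda$), it satisfies $h^c(p^c(m)) - m = m^*$ for all $m \in M$, and $(\lambda, \mu^c)$ is a quadratic form on $A$ with values in $(M^c_e, M, h^c, p^c)$: for all $a, a' \in A$ one has $\mu^c(a + a') = \mu^c(a) + \mu^c(a') + p^c(\lambda(a, a'))$ and $h^c(\mu^c(a)) = \lambda(a, a)$. -/

import Mathlib

/-!
Write `conj (m, a) = (m^*, -a)`, so that `M^c_e` is `M ×_lam A` with `conj x` identified with `x`.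
Since `conj x + x = p (h x)`, this gives `2 x = p (h x)` in the quotient. Commutators in
`M ×_lam A` are central, `y + x = x + y + p (c - c^*)` with `c = lam(x, y)` by hermitian symmetry,
and `p (c^*) = conj (p c)` is identified with `p c`; so the quotient is abelian. Finally
`h ∘ conj = h`, so `h` descends to `h^c`.
-/

namespace CST

/-- The normal closure of a set in an additive group: the smallest normal
subgroup containing the set. -/
def nclosure {G : Type*} [AddGroup G] (s : Set G) : AddSubgroup G :=
  sInf {N : AddSubgroup G | N.Normal ∧ s ⊆ N}

instance nclosure_normal {G : Type*} [AddGroup G] (s : Set G) :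
    (nclosure s).Normal := by
  constructor
  intro n hn g
  rw [nclosure, AddSubgroup.mem_sInf] at hn ⊢
  intro N hN
  exact hN.1.conj_mem n (hn N hN) g

variable {A M : Type*} [AddCommGroup A] [AddCommGroup M]

/-- The underlying type of the central extension `M ×_lam A` determined by a
bilinear map `lam : A × A → M`. -/
def Ext (lam : A →+ A →+ M) : Type _ := M × A

namespace Ext

variable (lam : A →+ A →+ M)

/-- The element of `M ×_lam A` given by the pair `(m, a)`. -/
def mkE (m : M) (a : A) : Ext lam := (m, a)

instance : Add (Ext lam) :=
  ⟨fun x y => (x.1 + y.1 - lam x.2 y.2, x.2 + y.2)⟩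

instance : Zero (Ext lam) := ⟨((0 : M), (0 : A))⟩

instance : Neg (Ext lam) :=
  ⟨fun x => (-x.1 - lam x.2 x.2, -x.2)⟩

theorem add_def (x y : Ext lam) :
    x + y = (x.1 + y.1 - lam x.2 y.2, x.2 + y.2) := rfl

theorem zero_def : (0 : Ext lam) = ((0 : M), (0 : A)) := rfl

theorem neg_def (x : Ext lam) : -x = (-x.1 - lam x.2 x.2, -x.2) := rfl

/-- The operation `(m, a) + (m', a') = (m + m' - lam a a', a + a')` makes
`M ×_lam A` into a group. -/
instance : AddGroup (Ext lam) :=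
  AddGroup.ofLeftAxioms
    (by
      intro x y z
      simp only [add_def, map_add, AddMonoidHom.add_apply, map_zero]
      show ((x.1 + y.1 - lam x.2 y.2 + z.1 - lam (x.2 + y.2) z.2, x.2 + y.2 + z.2) : M × A)
        = (x.1 + (y.1 + z.1 - lam y.2 z.2) - lam x.2 (y.2 + z.2), x.2 + (y.2 + z.2))
      refine Prod.ext ?_ ?_ <;>
        simp only [map_add, AddMonoidHom.add_apply] <;> abel)
    (by
      intro x
      simp only [add_def, zero_def, map_zero, AddMonoidHom.zero_apply]
      show ((0 + x.1 - lam 0 x.2, 0 + x.2) : M × A) = x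
      refine Prod.ext ?_ ?_ <;> simp)
    (by
      intro x
      simp only [add_def, neg_def, zero_def, map_neg, AddMonoidHom.neg_apply]
      show ((-x.1 - lam x.2 x.2 + x.1 - lam (-x.2) x.2, -x.2 + x.2) : M × A) = ((0 : M), (0 : A))
      refine Prod.ext ?_ ?_ <;>
        simp only [map_neg, AddMonoidHom.neg_apply] <;> abel)

/-- The function `h_lam (m, a) = m + m^* + lam a a`. -/
def hfun (star : M →+ M) : Ext lam → M :=
  fun x => x.1 + star x.1 + lam x.2 x.2

/-- The function `p_lam m = (m, 0)`. -/
def pfun : M → Ext lam := fun m => mkE lam m 0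

/-- The function `mu_lam a = (0, a)`. -/
def mufun : A → Ext lam := fun a => mkE lam 0 a

/-- The set of relations `(m^*, -a) - (m, a)` in `M ×_lam A`. -/
def relSet (star : M →+ M) : Set (Ext lam) :=
  {x | ∃ (m : M) (a : A), x = mkE lam (star m) (-a) - mkE lam m a}

end Ext

open Ext

theorem subset_nclosure {G : Type*} [AddGroup G] (s : Set G) : s ⊆ nclosure s :=
  fun _ hx => AddSubgroup.mem_sInf.2 fun _ hN => hN.2 hx

theorem nclosure_le {G : Type*} [AddGroup G] {s : Set G} {N : AddSubgroup G}
    (hN : N.Normal) (hs : s ⊆ N) : nclosure s ≤ N :=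
  sInf_le ⟨hN, hs⟩

namespace Ext

variable (lam : A →+ A →+ M) (star : M →+ M)

theorem mkE_add_mkE (m m' : M) (a a' : A) :
    mkE lam m a + mkE lam m' a' = mkE lam (m + m' - lam a a') (a + a') := rfl

def phom : M →+ Ext lam :=
  AddMonoidHom.mk' (pfun lam) fun m m' => by
    simp only [pfun, mkE_add_mkE, map_zero, sub_zero, add_zero]

theorem phom_apply (m : M) : phom lam m = mkE lam m 0 := rfl

theorem add_comm_eq (m m' : M) (a a' : A) :
    mkE lam m' a' + mkE lam m a
      = mkE lam m a + mkE lam m' a' + phom lam (lam a a' - lam a' a) := by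
  rw [phom_apply, mkE_add_mkE, mkE_add_mkE, mkE_add_mkE]
  simp only [map_zero, sub_zero, add_zero, add_comm a']
  congr 1
  abel

theorem mufun_add (a a' : A) :
    mufun lam (a + a') = mufun lam a + mufun lam a' + phom lam (lam a a') := by
  simp only [mufun, phom_apply, mkE_add_mkE, map_zero, sub_zero,
    add_zero, sub_add_cancel]

/-- `relSet lam star` is the set of the `conj x - x`, so `conj` becomes the identity in `M^c_e`. -/
def conj (x : Ext lam) : Ext lam := mkE lam (star x.1) (-x.2)

theorem conj_mkE (m : M) (a : A) : conj lam star (mkE lam m a) = mkE lam (star m) (-a) := rfl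

theorem conj_phom (m : M) : conj lam star (phom lam m) = phom lam (star m) := by
  rw [phom_apply, phom_apply, conj_mkE]
  exact congrArg (mkE lam (star m)) neg_zero

theorem conj_add_self (m : M) (a : A) :
    conj lam star (mkE lam m a) + mkE lam m a = phom lam (m + star m + lam a a) := by
  rw [conj_mkE, phom_apply, mkE_add_mkE, map_neg, AddMonoidHom.neg_apply, sub_neg_eq_add,
    neg_add_cancel, add_comm (star m)]

variable {lam star}

theorem hfun_conj (star_star : ∀ m : M, star (star m) = m) (m : M) (a : A) :
    hfun lam star (conj lam star (mkE lam m a)) = hfun lam star (mkE lam m a) := by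
  simp only [hfun, conj, mkE, star_star, map_neg, AddMonoidHom.neg_apply, neg_neg, add_comm]

def hhom (herm : ∀ a a' : A, lam a' a = star (lam a a')) : Ext lam →+ M :=
  AddMonoidHom.mk' (hfun lam star) fun x y => by
    simp only [hfun, add_def, map_add, map_sub, AddMonoidHom.add_apply, herm x.2 y.2]
    abel

end Ext

section Quotient

variable {lam : A →+ A →+ M} {star : M →+ M}

local notation "Q" => Ext lam ⧸ nclosure (relSet lam star)

theorem mk_conj (x : Ext lam) : (conj lam star x : Q) = x :=
  QuotientAddGroup.eq_iff_sub_mem.2 (subset_nclosure _ ⟨x.1, x.2, rfl⟩)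

theorem mk_add_comm (herm : ∀ a a' : A, lam a' a = star (lam a a')) (m m' : M) (a a' : A) :
    (mkE lam m a + mkE lam m' a' : Q) = mkE lam m' a' + mkE lam m a := by
  have hp : (phom lam (star (lam a a')) : Q) = phom lam (lam a a') := by
    rw [← conj_phom, mk_conj]
  rw [← QuotientAddGroup.mk_add, ← QuotientAddGroup.mk_add, add_comm_eq lam m' m a' a,
    QuotientAddGroup.mk_add, herm, map_sub, QuotientAddGroup.mk_sub, hp, sub_self, add_zero]

theorem two_nsmul_mk (m : M) (a : A) :
    2 • (mkE lam m a : Q) = phom lam (m + star m + lam a a) := by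
  rw [two_nsmul, ← conj_add_self, QuotientAddGroup.mk_add, mk_conj]

theorem nclosure_le_ker_hhom (star_star : ∀ m : M, star (star m) = m)
    (herm : ∀ a a' : A, lam a' a = star (lam a a')) :
    nclosure (relSet lam star) ≤ (hhom herm).ker := by
  refine nclosure_le inferInstance ?_
  rintro _ ⟨m, a, rfl⟩
  rw [SetLike.mem_coe, AddMonoidHom.mem_ker, map_sub, sub_eq_zero]
  exact hfun_conj star_star m a

end Quotient

/-- The quotient `M^c_e` is abelian, `(M^c_e, M, h^c, p^c)` is a
commutative quadratic group refining `(M, *)`, and `(lam, mu^c)` is a quadratic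
form with values in it. -/
theorem quotient_commutative_quadratic (lam : A →+ A →+ M) (star : M →+ M)
    (star_star : ∀ m : M, star (star m) = m)
    (herm : ∀ a a' : A, lam a' a = star (lam a a')) :
    (∀ x y : Ext lam ⧸ nclosure (relSet lam star), x + y = y + x) ∧
    ∃ hc : (Ext lam ⧸ nclosure (relSet lam star)) →+ M,
      (∀ (m : M) (a : A),
        hc (QuotientAddGroup.mk (mkE lam m a)) = m + star m + lam a a) ∧
      ∃ pc : M →+ Ext lam ⧸ nclosure (relSet lam star),
        (∀ m : M, pc m = QuotientAddGroup.mk (mkE lam m 0)) ∧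
        (∀ x : Ext lam ⧸ nclosure (relSet lam star), pc (hc x) = 2 • x) ∧
        (∀ x : Ext lam ⧸ nclosure (relSet lam star),
          hc (pc (hc x)) = 2 • hc x) ∧
        (∀ m : M, hc (pc m) - m = star m) ∧
        (∀ a a' : A,
          (QuotientAddGroup.mk (mkE lam 0 (a + a')) :
              Ext lam ⧸ nclosure (relSet lam star))
            = QuotientAddGroup.mk (mkE lam 0 a)
              + QuotientAddGroup.mk (mkE lam 0 a') + pc (lam a a')) ∧
        (∀ a : A, hc (QuotientAddGroup.mk (mkE lam 0 a)) = lam a a) := by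
  set N := nclosure (relSet lam star)
  let hc := QuotientAddGroup.lift N (hhom herm) (nclosure_le_ker_hhom star_star herm)
  let pc := (QuotientAddGroup.mk' N).comp (phom lam)
  have pc_hc (x : Ext lam ⧸ N) : pc (hc x) = 2 • x := by
    induction x using QuotientAddGroup.induction_on with
    | H x => exact (two_nsmul_mk x.1 x.2).symm
  refine ⟨fun x y => ?_, hc, fun _ _ => rfl, pc, fun _ => rfl, pc_hc,
    fun x => by rw [pc_hc, map_nsmul], fun m => ?_, fun a a' => ?_, fun a => ?_⟩
  · induction x using QuotientAddGroup.induction_on with | H x =>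
    induction y using QuotientAddGroup.induction_on with | H y =>
    exact mk_add_comm herm x.1 y.1 x.2 y.2
  · show hfun lam star (mkE lam m 0) - m = star m
    simp [hfun, mkE]
  · exact congrArg _ (mufun_add lam a a')
  · show hfun lam star (mkE lam 0 a) = lam a a
    simp [hfun, mkE]

end CST
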